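/- arXiv:2002.10673 — 4 statements merged into one kernel-verified Lean document; each statement's English description precedes it below -/
import Mathlib

section
/- Let X⋆ be an n×n positive semidefinite matrix of rank r⋆ with eigendecomposition X⋆ = Σᵢ λᵢ vᵢvᵢᵀ where λ₁ ≥ … ≥ λ_{r⋆} > 0 and the vᵢ are orthonormal. Then X⋆ is the unique minimizer of the trace function tr(X) over all positive semidefinite matrices X satisfying tr(vᵢvᵢᵀ X) = λᵢ for i = 1,…,r⋆ and tr((vᵢvⱼᵀ + vⱼvᵢᵀ)/2 · X) = 0 for 1 ≤ i < j ≤ r⋆. -/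
/-!
Let `W` be the matrix with rows `vᵢ`. Orthonormality says `W Wᵀ = 1`, so `P = Wᵀ W` is an
orthogonal projection and `X⋆ = Wᵀ diag(λ) W`; for symmetric `X` the constraints say exactly
`W X Wᵀ = diag(λ)`. Hence every feasible `X` has compression `P X P = X⋆`. For positive
semidefinite `X`, `tr X - tr (P X P) = tr ((1 - P) X (1 - P)) ≥ 0`, and equality forces
`(1 - P) X (1 - P) = 0`, hence `X (1 - P) = 0` and `X = P X P`.
-/

open Matrix

namespace Matrix

variable {ι m R : Type*}

lemma of_mul_transpose_eq_one [Fintype m] [DecidableEq ι] [CommSemiring R] {v : ι → m → R}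
    (hv : ∀ i j, v i ⬝ᵥ v j = if i = j then (1 : R) else 0) : of v * (of v)ᵀ = 1 := by
  ext i j
  rw [mul_apply', one_apply]
  exact hv i j

lemma sum_smul_vecMulVec_self_eq [Fintype ι] [DecidableEq ι] [CommSemiring R]
    (v : ι → m → R) (lam : ι → R) :
    ∑ i, lam i • vecMulVec (v i) (v i) = (of v)ᵀ * diagonal lam * of v := by
  ext k l
  simp [mul_apply, vecMulVec_apply, Matrix.sum_apply, diagonal_apply, mul_comm, mul_left_comm]

lemma trace_vecMulVec_mul_eq_of_mul_mul_transpose_apply [Fintype m] [CommSemiring R]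
    (v : ι → m → R) (X : Matrix m m R) (i j : ι) :
    (vecMulVec (v i) (v j) * X).trace = (of v * X * (of v)ᵀ) j i := by
  rw [Matrix.mul_assoc, mul_apply', vecMulVec_mul, trace_vecMulVec, dotProduct_comm,
    ← dotProduct_mulVec]
  rfl

lemma of_mul_mul_transpose_eq_diagonal_iff [Fintype m] [LinearOrder ι] [Field R]
    [NeZero (2 : R)] (v : ι → m → R) (lam : ι → R) {X : Matrix m m R} (hX : X.IsSymm) :
    of v * X * (of v)ᵀ = diagonal lam ↔
      (∀ i, (vecMulVec (v i) (v i) * X).trace = lam i) ∧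
      ∀ i j, i < j →
        (((2 : R)⁻¹ • (vecMulVec (v i) (v j) + vecMulVec (v j) (v i))) * X).trace = 0 := by
  have hG : (of v * X * (of v)ᵀ).IsSymm := by
    simp only [IsSymm, transpose_mul, transpose_transpose, hX.eq, Matrix.mul_assoc]
  simp only [Matrix.smul_mul, Matrix.add_mul, trace_smul, trace_add,
    trace_vecMulVec_mul_eq_of_mul_mul_transpose_apply, hG.apply, ← two_mul, smul_eq_mul,
    inv_mul_cancel_left₀ (two_ne_zero' R), ← Matrix.ext_iff]
  constructor
  · intro h
    exact ⟨fun i => by simp [h], fun i j hij => by simp [h, hij.ne]⟩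
  · rintro ⟨hdiag, hoff⟩ i j
    rcases lt_trichotomy i j with hij | rfl | hij
    · simp [hoff i j hij, hij.ne]
    · simp [hdiag]
    · rw [hG.apply j i, hoff j i hij, diagonal_apply_ne _ hij.ne']

lemma isStarProjection_conjTranspose_mul_self [Fintype ι] [Fintype m] [DecidableEq ι]
    [CommSemiring R] [StarRing R] {W : Matrix ι m R} (hW : W * Wᴴ = 1) :
    IsStarProjection (Wᴴ * W) where
  isIdempotentElem := by
    rw [IsIdempotentElem, Matrix.mul_assoc, ← Matrix.mul_assoc W, hW, Matrix.one_mul]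
  isSelfAdjoint := by
    rw [IsSelfAdjoint, star_eq_conjTranspose, conjTranspose_mul, conjTranspose_conjTranspose]

lemma trace_eq_trace_mul_mul_add_trace_mul_mul [Fintype m] [DecidableEq m] [CommRing R]
    {P : Matrix m m R} (hP : IsIdempotentElem P) (A : Matrix m m R) :
    A.trace = (P * A * P).trace + ((1 - P) * A * (1 - P)).trace := by
  rw [trace_mul_cycle, hP.eq, trace_mul_cycle, hP.one_sub.eq, sub_mul, one_mul, trace_sub]
  ring

lemma PosSemidef.mul_mul_of_isStarProjection [Fintype m] [Ring R] [PartialOrder R] [StarRing R]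
    {A P : Matrix m m R} (hA : A.PosSemidef) (hP : IsStarProjection P) :
    (P * A * P).PosSemidef := by
  simpa only [← star_eq_conjTranspose, hP.isSelfAdjoint.star_eq] using
    hA.conjTranspose_mul_mul_same P

section RCLike

open scoped ComplexOrder MatrixOrder

variable {𝕜 : Type*} [Fintype m] [DecidableEq m] [RCLike 𝕜] {A P : Matrix m m 𝕜}

lemma PosSemidef.mul_eq_zero_of_conjTranspose_mul_mul_eq_zero (hA : A.PosSemidef)
    {M : Matrix m ι 𝕜} (h : Mᴴ * A * M = 0) : A * M = 0 := by
  obtain ⟨B, rfl⟩ := CStarAlgebra.nonneg_iff_eq_star_mul_self.mp hA.nonneg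
  rw [star_eq_conjTranspose] at h ⊢
  rw [conjTranspose_mul_self_mul_eq_zero, ← conjTranspose_mul_self_eq_zero,
    ← h, conjTranspose_mul, Matrix.mul_assoc, Matrix.mul_assoc, Matrix.mul_assoc]

lemma PosSemidef.trace_mul_mul_le (hA : A.PosSemidef) (hP : IsStarProjection P) :
    (P * A * P).trace ≤ A.trace := by
  rw [trace_eq_trace_mul_mul_add_trace_mul_mul hP.isIdempotentElem A]
  exact le_add_of_nonneg_right (hA.mul_mul_of_isStarProjection hP.one_sub).trace_nonneg

lemma PosSemidef.mul_mul_eq_of_trace_eq (hA : A.PosSemidef) (hP : IsStarProjection P)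
    (h : (P * A * P).trace = A.trace) : P * A * P = A := by
  have hQ := hP.one_sub
  have hQAQ : (1 - P) * A * (1 - P) = 0 := by
    rw [← (hA.mul_mul_of_isStarProjection hQ).trace_eq_zero_iff]
    linear_combination -h - trace_eq_trace_mul_mul_add_trace_mul_mul hP.isIdempotentElem A
  have hAQ : A * (1 - P) = 0 := hA.mul_eq_zero_of_conjTranspose_mul_mul_eq_zero <| by
    rwa [← star_eq_conjTranspose, hQ.isSelfAdjoint.star_eq]
  have hQA : (1 - P) * A = 0 := by
    rw [← hQ.isSelfAdjoint.star_eq, ← hA.isHermitian.eq, star_eq_conjTranspose,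
      ← conjTranspose_mul, hAQ, conjTranspose_zero]
  rw [mul_sub, mul_one, sub_eq_zero] at hAQ
  rw [sub_mul, one_mul, sub_eq_zero] at hQA
  rw [← hQA, ← hAQ]

end RCLike
end Matrix

theorem stmt0_general (n r : ℕ) (v : Fin r → Fin n → ℝ)
    (hortho : ∀ i j, v i ⬝ᵥ v j = if i = j then (1 : ℝ) else 0)
    (lam : Fin r → ℝ) (hpos : ∀ i, 0 < lam i)
    (Xstar : Matrix (Fin n) (Fin n) ℝ)
    (hXstar : Xstar = ∑ i, lam i • vecMulVec (v i) (v i)) :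
    (Xstar.PosSemidef ∧
      (∀ i : Fin r, ((vecMulVec (v i) (v i)) * Xstar).trace = lam i) ∧
      (∀ i j : Fin r, i < j →
        (((2 : ℝ)⁻¹ • (vecMulVec (v i) (v j) + vecMulVec (v j) (v i))) * Xstar).trace = 0)) ∧
    ∀ X : Matrix (Fin n) (Fin n) ℝ, X.PosSemidef →
      (∀ i : Fin r, ((vecMulVec (v i) (v i)) * X).trace = lam i) →
      (∀ i j : Fin r, i < j →
        (((2 : ℝ)⁻¹ • (vecMulVec (v i) (v j) + vecMulVec (v j) (v i))) * X).trace = 0) →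
      Xstar.trace ≤ X.trace ∧ (X.trace = Xstar.trace → X = Xstar) := by
  rw [sum_smul_vecMulVec_self_eq] at hXstar
  set W := of v
  have hWt : Wᴴ = Wᵀ := conjTranspose_eq_transpose_of_trivial W
  have hW : W * Wᵀ = 1 := of_mul_transpose_eq_one hortho
  have hP : IsStarProjection (Wᵀ * W) := hWt ▸ isStarProjection_conjTranspose_mul_self (hWt ▸ hW)
  have hpsd : Xstar.PosSemidef := by
    rw [hXstar, ← hWt]
    exact (posSemidef_diagonal_iff.mpr fun i => (hpos i).le).conjTranspose_mul_mul_same W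
  have hcompress : ∀ X, W * X * Wᵀ = diagonal lam → Wᵀ * W * X * (Wᵀ * W) = Xstar := by
    intro X hX
    rw [hXstar, ← hX]
    simp only [Matrix.mul_assoc]
  have hsymm {X : Matrix (Fin n) (Fin n) ℝ} (hX : X.PosSemidef) : X.IsSymm :=
    isHermitian_iff_isSymm.mp hX.isHermitian
  have hfeas : W * Xstar * Wᵀ = diagonal lam := by
    rw [hXstar, show W * (Wᵀ * diagonal lam * W) * Wᵀ = W * Wᵀ * diagonal lam * (W * Wᵀ) by
      simp only [Matrix.mul_assoc], hW, Matrix.one_mul, Matrix.mul_one]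
  refine ⟨⟨hpsd, (of_mul_mul_transpose_eq_diagonal_iff v lam (hsymm hpsd)).mp hfeas⟩,
    fun X hX hdiag hoff => ?_⟩
  have hPXP := hcompress X ((of_mul_mul_transpose_eq_diagonal_iff v lam (hsymm hX)).mpr
    ⟨hdiag, hoff⟩)
  refine ⟨hPXP ▸ hX.trace_mul_mul_le hP, fun h => ?_⟩
  rw [← hPXP, hX.mul_mul_eq_of_trace_eq hP (hPXP ▸ h.symm)]

/-- Any PSD matrix `Xstar = ∑ i, lam i • vᵢvᵢᵀ` (with `v` orthonormal and `lam` positive,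
decreasing) is the unique minimizer of the trace over the PSD matrices satisfying
`tr(vᵢvᵢᵀ X) = lamᵢ` and `tr(((vᵢvⱼᵀ + vⱼvᵢᵀ)/2) X) = 0` for `i < j`. -/
theorem stmt0 (n r : ℕ) (v : Fin r → Fin n → ℝ)
    (hortho : ∀ i j, v i ⬝ᵥ v j = if i = j then (1 : ℝ) else 0)
    (lam : Fin r → ℝ) (hpos : ∀ i, 0 < lam i)
    (hdec : ∀ i j : Fin r, i ≤ j → lam j ≤ lam i)
    (Xstar : Matrix (Fin n) (Fin n) ℝ)
    (hXstar : Xstar = ∑ i, lam i • vecMulVec (v i) (v i)) :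
    (Xstar.PosSemidef ∧
      (∀ i : Fin r, ((vecMulVec (v i) (v i)) * Xstar).trace = lam i) ∧
      (∀ i j : Fin r, i < j →
        (((2 : ℝ)⁻¹ • (vecMulVec (v i) (v j) + vecMulVec (v j) (v i))) * Xstar).trace = 0)) ∧
    ∀ X : Matrix (Fin n) (Fin n) ℝ, X.PosSemidef →
      (∀ i : Fin r, ((vecMulVec (v i) (v i)) * X).trace = lam i) →
      (∀ i j : Fin r, i < j →
        (((2 : ℝ)⁻¹ • (vecMulVec (v i) (v j) + vecMulVec (v j) (v i))) * X).trace = 0) →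
      Xstar.trace ≤ X.trace ∧ (X.trace = Xstar.trace → X = Xstar) :=
  stmt0_general n r v hortho lam hpos Xstar hXstar
end

section
/- For a real n₁×n₂ matrix X and t ≥ 0, the nuclear norm satisfies ‖X‖_* ≤ t if and only if there exist symmetric matrices X₁ ∈ S^{n₁} and X₂ ∈ S^{n₂} such that the block matrix [[X₁, X],[Xᵀ, X₂]] is positive semidefinite and tr(X₁) + tr(X₂) ≤ 2t. -/
/-!
Take a singular value decomposition `X = U Σ Vᵀ` with `V` orthogonal and `U Uᵀ` an orthogonal
projection. Then `[[U Σ Uᵀ, X], [Xᵀ, V Σ Vᵀ]] = W Σ Wᵀ` with `W = [U; V]` is positive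
semidefinite, and both diagonal blocks have trace `tr Σ = ‖X‖_*`. Conversely, conjugating a
positive semidefinite block matrix `M = [[X₁, X], [Xᵀ, X₂]]` by `W' = [U; -V]` gives
`0 ≤ tr (W'ᵀ M W') = tr (Uᵀ X₁ U) + tr X₂ - 2 ‖X‖_*`, and `tr (Uᵀ X₁ U) = tr (X₁ U Uᵀ) ≤ tr X₁`.
-/

open Matrix Finset

/-- The nuclear norm of a real matrix: the sum of its singular values, i.e. the sum of the
square roots of the eigenvalues of `Xᴴ X`. -/
noncomputable def nuclearNorm {n₁ n₂ : ℕ} (X : Matrix (Fin n₁) (Fin n₂) ℝ) : ℝ :=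
  ∑ i, Real.sqrt ((Matrix.isHermitian_conjTranspose_mul_self X).eigenvalues i)

namespace Matrix

lemma PosSemidef.trace_mul_le_trace {n R : Type*} [Fintype n] [DecidableEq n] [CommRing R]
    [PartialOrder R] [StarRing R] [AddLeftMono R] {A P : Matrix n n R} (hA : A.PosSemidef)
    (hP : Pᴴ = P) (hPP : P * P = P) :
    (A * P).trace ≤ A.trace := by
  have hQ := (hA.mul_mul_conjTranspose_same (1 - P)).trace_nonneg
  have hexp : (1 - P) * A * (1 - P)ᴴ = A - P * A - A * P + P * A * P := by
    rw [conjTranspose_sub, conjTranspose_one, hP]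
    noncomm_ring
  rw [hexp, trace_add, trace_sub, trace_sub, trace_mul_cycle, hPP, trace_mul_comm P A,
    sub_add_cancel, sub_nonneg] at hQ
  exact hQ

section SingularValueDecomposition

variable {m n : Type*} [Fintype m] [Fintype n] [DecidableEq n]

noncomputable def singularValues (X : Matrix m n ℝ) : n → ℝ :=
  fun i => √((isHermitian_conjTranspose_mul_self X).eigenvalues i)

noncomputable def rightSingularVectors (X : Matrix m n ℝ) : Matrix n n ℝ :=
  (isHermitian_conjTranspose_mul_self X).eigenvectorUnitary

/-- Since `0⁻¹ = 0`, the columns belonging to vanishing singular values are zero, so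
`Uᵀ U = diagonal (σ * σ⁻¹)` is a diagonal projection rather than the identity. -/
noncomputable def leftSingularVectors (X : Matrix m n ℝ) : Matrix m n ℝ :=
  X * rightSingularVectors X * diagonal (singularValues X)⁻¹

variable (X : Matrix m n ℝ)

local notation "σ" => singularValues X
local notation "V" => rightSingularVectors X
local notation "U" => leftSingularVectors X

lemma singularValues_nonneg : 0 ≤ σ := fun _ => Real.sqrt_nonneg _

lemma singularValues_mul_self :
    σ * σ = (isHermitian_conjTranspose_mul_self X).eigenvalues :=
  funext fun i => Real.mul_self_sqrt ((posSemidef_conjTranspose_mul_self X).eigenvalues_nonneg i)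

lemma transpose_rightSingularVectors_mul_self : Vᵀ * V = 1 := by
  unfold rightSingularVectors
  simpa [star_eq_conjTranspose] using
    Unitary.coe_star_mul_self (isHermitian_conjTranspose_mul_self X).eigenvectorUnitary

lemma rightSingularVectors_mul_transpose_self : V * Vᵀ = 1 :=
  mul_eq_one_comm.mp (transpose_rightSingularVectors_mul_self X)

lemma transpose_rightSingularVectors_mul_gram_mul :
    Vᵀ * (Xᵀ * X) * V = diagonal (σ * σ) := by
  rw [singularValues_mul_self]
  unfold rightSingularVectors
  simpa [Unitary.conjStarAlgAut_star_apply, star_eq_conjTranspose] using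
    (isHermitian_conjTranspose_mul_self X).conjStarAlgAut_star_eigenvectorUnitary

lemma transpose_leftSingularVectors_mul_mul_rightSingularVectors :
    Uᵀ * X * V = diagonal σ := by
  calc Uᵀ * X * V = diagonal σ⁻¹ * (Vᵀ * (Xᵀ * X) * V) := by
        simp only [leftSingularVectors, transpose_mul, diagonal_transpose, Matrix.mul_assoc]
    _ = diagonal σ := by
        rw [transpose_rightSingularVectors_mul_gram_mul, diagonal_mul_diagonal]
        congr 1
        funext i
        exact (mul_assoc _ _ _).symm.trans (inv_mul_mul_self (σ i))

lemma transpose_rightSingularVectors_mul_transpose_mul_leftSingularVectors :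
    Vᵀ * Xᵀ * U = diagonal σ := by
  simpa [Matrix.mul_assoc] using
    congrArg transpose (transpose_leftSingularVectors_mul_mul_rightSingularVectors X)

lemma transpose_leftSingularVectors_mul_self : Uᵀ * U = diagonal (σ * σ⁻¹) := by
  calc Uᵀ * U = Uᵀ * X * V * diagonal σ⁻¹ := by
        simp only [leftSingularVectors, Matrix.mul_assoc]
    _ = diagonal (σ * σ⁻¹) := by
        rw [transpose_leftSingularVectors_mul_mul_rightSingularVectors, diagonal_mul_diagonal]
        rfl

lemma transpose_leftSingularVectors_mul_self_mul_diagonal :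
    Uᵀ * U * diagonal σ = diagonal σ := by
  rw [transpose_leftSingularVectors_mul_self, diagonal_mul_diagonal]
  congr 1
  funext i
  exact mul_inv_mul_cancel (σ i)

lemma leftSingularVectors_mul_transpose_mul_self : U * Uᵀ * U = U := by
  rw [Matrix.mul_assoc, transpose_leftSingularVectors_mul_self, leftSingularVectors,
    Matrix.mul_assoc, diagonal_mul_diagonal]
  congr 2
  funext i
  simpa [mul_assoc] using mul_inv_mul_cancel (σ i)⁻¹

lemma mul_rightSingularVectors_eq : X * V = U * diagonal σ := by
  have hgram : Vᵀ * Xᵀ * X * V = diagonal σ * diagonal σ := by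
    simpa only [Matrix.mul_assoc] using
      (transpose_rightSingularVectors_mul_gram_mul X).trans (diagonal_mul_diagonal _ _).symm
  have hDUXV : diagonal σ * Uᵀ * X * V = diagonal σ * diagonal σ := by
    rw [Matrix.mul_assoc _ Uᵀ, Matrix.mul_assoc,
      transpose_leftSingularVectors_mul_mul_rightSingularVectors]
  have hDUUD : diagonal σ * Uᵀ * U * diagonal σ = diagonal σ * diagonal σ := by
    rw [Matrix.mul_assoc _ Uᵀ, Matrix.mul_assoc,
      transpose_leftSingularVectors_mul_self_mul_diagonal]
  -- `Y = X V - U Σ` satisfies `Yᵀ Y = 0`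
  rw [← sub_eq_zero, ← conjTranspose_mul_self_eq_zero]
  simp only [conjTranspose_eq_transpose_of_trivial, transpose_sub, transpose_mul,
    diagonal_transpose, Matrix.sub_mul, Matrix.mul_sub, ← Matrix.mul_assoc]
  rw [hgram, transpose_rightSingularVectors_mul_transpose_mul_leftSingularVectors, hDUXV, hDUUD,
    sub_self]

lemma leftSingularVectors_mul_diagonal_mul_transpose : U * diagonal σ * Vᵀ = X := by
  rw [← mul_rightSingularVectors_eq, Matrix.mul_assoc, rightSingularVectors_mul_transpose_self,
    Matrix.mul_one]

theorem exists_posSemidef_fromBlocks_trace_add_trace_eq :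
    ∃ (A : Matrix m m ℝ) (B : Matrix n n ℝ), A.IsSymm ∧ B.IsSymm ∧
      (fromBlocks A X Xᵀ B).PosSemidef ∧ A.trace + B.trace = 2 * ∑ i, σ i := by
  have hD : (diagonal σ).PosSemidef := posSemidef_diagonal_iff.mpr (singularValues_nonneg X)
  have hXt : V * diagonal σ * Uᵀ = Xᵀ := by
    conv_rhs => rw [← leftSingularVectors_mul_diagonal_mul_transpose X]
    simp [Matrix.mul_assoc]
  refine ⟨U * diagonal σ * Uᵀ, V * diagonal σ * Vᵀ, ?_, ?_, ?_, ?_⟩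
  · simp [IsSymm, Matrix.mul_assoc]
  · simp [IsSymm, Matrix.mul_assoc]
  · have hblock : fromBlocks (U * diagonal σ * Uᵀ) X Xᵀ (V * diagonal σ * Vᵀ) =
        fromRows U V * diagonal σ * (fromRows U V)ᵀ := by
      rw [transpose_fromRows, fromRows_mul, fromRows_mul_fromCols,
        leftSingularVectors_mul_diagonal_mul_transpose, hXt]
    simpa [hblock, conjTranspose_eq_transpose_of_trivial] using
      hD.mul_mul_conjTranspose_same (fromRows U V)
  · rw [trace_mul_cycle, transpose_leftSingularVectors_mul_self_mul_diagonal, trace_mul_cycle,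
      transpose_rightSingularVectors_mul_self, Matrix.one_mul, trace_diagonal]
    ring

theorem two_mul_sum_singularValues_le_trace_add_trace [DecidableEq m] {A : Matrix m m ℝ}
    {B : Matrix n n ℝ} (h : (fromBlocks A X Xᵀ B).PosSemidef) :
    2 * ∑ i, σ i ≤ A.trace + B.trace := by
  have hA : A.PosSemidef := toBlocks_fromBlocks₁₁ A X Xᵀ B ▸ h.submatrix Sum.inl
  have hP : (U * Uᵀ)ᴴ = U * Uᵀ := by
    simp [conjTranspose_eq_transpose_of_trivial]
  have hPP : U * Uᵀ * (U * Uᵀ) = U * Uᵀ := by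
    rw [← Matrix.mul_assoc, leftSingularVectors_mul_transpose_mul_self]
  have hUAU : (Uᵀ * A * U).trace ≤ A.trace := by
    rw [trace_mul_cycle, trace_mul_comm]
    exact hA.trace_mul_le_trace hP hPP
  have hVBV : (Vᵀ * B * V).trace = B.trace := by
    rw [trace_mul_cycle, rightSingularVectors_mul_transpose_self, Matrix.one_mul]
  have h0 := (h.conjTranspose_mul_mul_same (fromRows U (-V))).trace_nonneg
  simp only [conjTranspose_eq_transpose_of_trivial, transpose_fromRows, fromCols_mul_fromBlocks,
    fromCols_mul_fromRows, transpose_neg, Matrix.add_mul, Matrix.mul_neg, Matrix.neg_mul,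
    trace_add, trace_neg] at h0
  rw [transpose_rightSingularVectors_mul_transpose_mul_leftSingularVectors,
    transpose_leftSingularVectors_mul_mul_rightSingularVectors, trace_diagonal, hVBV] at h0
  linarith

end SingularValueDecomposition

end Matrix

theorem stmt6_general (n₁ n₂ : ℕ) (X : Matrix (Fin n₁) (Fin n₂) ℝ) (t : ℝ) :
    nuclearNorm X ≤ t ↔
      ∃ (X₁ : Matrix (Fin n₁) (Fin n₁) ℝ) (X₂ : Matrix (Fin n₂) (Fin n₂) ℝ),
        X₁.IsSymm ∧ X₂.IsSymm ∧
        (Matrix.fromBlocks X₁ X Xᵀ X₂).PosSemidef ∧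
        X₁.trace + X₂.trace ≤ 2 * t := by
  have hnorm : nuclearNorm X = ∑ i, singularValues X i := rfl
  constructor
  · intro hX
    obtain ⟨X₁, X₂, hX₁, hX₂, hpsd, htrace⟩ := exists_posSemidef_fromBlocks_trace_add_trace_eq X
    exact ⟨X₁, X₂, hX₁, hX₂, hpsd, by linarith⟩
  · rintro ⟨X₁, X₂, -, -, hpsd, htrace⟩
    linarith [two_mul_sum_singularValues_le_trace_add_trace X hpsd]

/-- SDP representation of the nuclear norm: `‖X‖_* ≤ t` iff there are symmetric `X₁, X₂` with
`[[X₁, X],[Xᵀ, X₂]] ⪰ 0` and `tr X₁ + tr X₂ ≤ 2t`. -/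
theorem stmt6 (n₁ n₂ : ℕ) (X : Matrix (Fin n₁) (Fin n₂) ℝ) (t : ℝ) (ht : 0 ≤ t) :
    nuclearNorm X ≤ t ↔
      ∃ (X₁ : Matrix (Fin n₁) (Fin n₁) ℝ) (X₂ : Matrix (Fin n₂) (Fin n₂) ℝ),
        X₁.IsSymm ∧ X₂.IsSymm ∧
        (Matrix.fromBlocks X₁ X Xᵀ X₂).PosSemidef ∧
        X₁.trace + X₂.trace ≤ 2 * t :=
  stmt6_general n₁ n₂ X t
end

section
/- Fix a rank-r matrix X♮ ∈ ℝ^{n₁×n₂} with singular value decomposition X♮ = UΣVᵀ, where U ∈ ℝ^{n₁×r}, V ∈ ℝ^{n₂×r} have orthonormal columns and Σ is diagonal with positive entries. Then the optimization problem: minimize tr(W₁) + tr(W₂) subject to [[W₁, X♮],[X♮ᵀ, W₂]] ⪰ 0 over W₁ ∈ S^{n₁}, W₂ ∈ S^{n₂}, has the unique solution W₁ = UΣUᵀ, W₂ = VΣVᵀ, with optimal value 2‖X♮‖_*. -/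
/-!
For feasible `W₁, W₂` and the certificate `Z = [U; -V]`, the duality gap splits as
`tr W₁ + tr W₂ - 2 tr Σ = tr (K W₁ K) + tr (L W₂ L) + tr (Zᴴ M Z)`, where `K = 1 - U Uᴴ` and
`L = 1 - V Vᴴ` are the projections onto the orthogonal complements of the column spaces and `M` is
the block matrix. All three are traces of positive semidefinite matrices, so the gap is nonnegative.
At a gap of zero each of these matrices vanishes, hence `W₁ K = 0`, `W₂ L = 0` and `M Z = 0`; the
last says `W₁ U = U Σ` and `W₂ V = V Σ`, so `W₁ = W₁ U Uᴴ = U Σ Uᴴ` and likewise for `W₂`.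
-/

open Matrix

open scoped ComplexOrder

namespace Matrix

variable {𝕜 : Type*} [RCLike 𝕜] {m n r : Type*} [Fintype m] [Fintype n] [Fintype r]

open scoped MatrixOrder in
theorem PosSemidef.mul_eq_zero_of_trace_conjTranspose_mul_mul_eq_zero {A : Matrix n n 𝕜}
    (hA : A.PosSemidef) {Z : Matrix n r 𝕜} (h : (Zᴴ * A * Z).trace = 0) : A * Z = 0 := by
  classical
  obtain ⟨B, rfl⟩ := CStarAlgebra.nonneg_iff_eq_star_mul_self.mp hA.nonneg
  have hBZ : B * Z = 0 := by
    rw [← trace_conjTranspose_mul_self_eq_zero_iff]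
    simpa only [conjTranspose_mul, star_eq_conjTranspose, Matrix.mul_assoc] using h
  rw [star_eq_conjTranspose, Matrix.mul_assoc, hBZ, Matrix.mul_zero]

theorem posSemidef_fromBlocks_mul_mul_conjTranspose {D : Matrix r r 𝕜} (hD : D.PosSemidef)
    (U : Matrix m r 𝕜) (V : Matrix n r 𝕜) :
    (fromBlocks (U * D * Uᴴ) (U * D * Vᴴ) (U * D * Vᴴ)ᴴ (V * D * Vᴴ)).PosSemidef := by
  have hfactor : fromBlocks (U * D * Uᴴ) (U * D * Vᴴ) (U * D * Vᴴ)ᴴ (V * D * Vᴴ) =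
      fromRows U V * D * (fromRows U V)ᴴ := by
    rw [conjTranspose_fromRows_eq_fromCols_conjTranspose, fromRows_mul, fromRows_mul_fromCols,
      conjTranspose_mul, conjTranspose_mul, conjTranspose_conjTranspose, hD.isHermitian.eq]
    simp only [Matrix.mul_assoc]
  rw [hfactor]
  exact hD.mul_mul_conjTranspose_same _

variable [DecidableEq r] {U : Matrix m r 𝕜} {V : Matrix n r 𝕜} {D : Matrix r r 𝕜}

theorem trace_mul_mul_conjTranspose (hU : Uᴴ * U = 1) (D : Matrix r r 𝕜) :
    (U * D * Uᴴ).trace = D.trace := by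
  rw [trace_mul_cycle, hU, Matrix.one_mul]

theorem fromBlocks_mul_fromRows_neg (hU : Uᴴ * U = 1) (hV : Vᴴ * V = 1) (hD : D.IsHermitian)
    (W₁ : Matrix m m 𝕜) (W₂ : Matrix n n 𝕜) :
    fromBlocks W₁ (U * D * Vᴴ) (U * D * Vᴴ)ᴴ W₂ * fromRows U (-V) =
      fromRows (W₁ * U - U * D) (V * D - W₂ * V) := by
  rw [fromBlocks_mul_fromRows]
  simp only [conjTranspose_mul, conjTranspose_conjTranspose, hD.eq, Matrix.mul_neg,
    Matrix.mul_assoc, hU, hV, Matrix.mul_one, sub_eq_add_neg, add_comm (V * D)]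

theorem trace_conjTranspose_fromRows_neg_mul_fromBlocks_mul (hU : Uᴴ * U = 1) (hV : Vᴴ * V = 1)
    (hD : D.IsHermitian) (W₁ : Matrix m m 𝕜) (W₂ : Matrix n n 𝕜) :
    ((fromRows U (-V))ᴴ * fromBlocks W₁ (U * D * Vᴴ) (U * D * Vᴴ)ᴴ W₂ * fromRows U (-V)).trace =
      (Uᴴ * W₁ * U).trace + (Vᴴ * W₂ * V).trace - 2 * D.trace := by
  rw [Matrix.mul_assoc, fromBlocks_mul_fromRows_neg hU hV hD,
    conjTranspose_fromRows_eq_fromCols_conjTranspose, fromCols_mul_fromRows]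
  simp only [conjTranspose_neg, Matrix.mul_sub, Matrix.neg_mul, ← Matrix.mul_assoc, hU, hV,
    Matrix.one_mul, trace_add, trace_sub, trace_neg]
  ring

variable [DecidableEq m] [DecidableEq n]

theorem trace_eq_trace_conjTranspose_mul_mul_add (hU : Uᴴ * U = 1) (W : Matrix m m 𝕜) :
    W.trace = (Uᴴ * W * U).trace + ((1 - U * Uᴴ)ᴴ * W * (1 - U * Uᴴ)).trace := by
  have hP : (U * Uᴴ) * (U * Uᴴ) = U * Uᴴ := by
    rw [Matrix.mul_assoc, ← Matrix.mul_assoc Uᴴ, hU, Matrix.one_mul]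
  have hK : (1 - U * Uᴴ) * (1 - U * Uᴴ)ᴴ = 1 - U * Uᴴ := by
    simp only [conjTranspose_sub, conjTranspose_one, conjTranspose_mul, conjTranspose_conjTranspose,
      Matrix.sub_mul, Matrix.mul_sub, Matrix.one_mul, Matrix.mul_one, hP]
    abel
  rw [trace_mul_cycle Uᴴ W U, trace_mul_cycle (1 - U * Uᴴ)ᴴ, hK, Matrix.sub_mul,
    Matrix.one_mul, trace_sub]
  abel

theorem trace_add_trace_sub_two_mul_trace (hU : Uᴴ * U = 1) (hV : Vᴴ * V = 1)
    (hD : D.IsHermitian) (W₁ : Matrix m m 𝕜) (W₂ : Matrix n n 𝕜) :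
    W₁.trace + W₂.trace - 2 * D.trace =
      ((1 - U * Uᴴ)ᴴ * W₁ * (1 - U * Uᴴ)).trace + ((1 - V * Vᴴ)ᴴ * W₂ * (1 - V * Vᴴ)).trace +
        ((fromRows U (-V))ᴴ * fromBlocks W₁ (U * D * Vᴴ) (U * D * Vᴴ)ᴴ W₂ *
          fromRows U (-V)).trace := by
  rw [trace_conjTranspose_fromRows_neg_mul_fromBlocks_mul hU hV hD,
    trace_eq_trace_conjTranspose_mul_mul_add hU W₁, trace_eq_trace_conjTranspose_mul_mul_add hV W₂]
  ring

variable {W₁ : Matrix m m 𝕜} {W₂ : Matrix n n 𝕜}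

theorem PosSemidef.fromBlocks_two_mul_trace_le
    (hM : (fromBlocks W₁ (U * D * Vᴴ) (U * D * Vᴴ)ᴴ W₂).PosSemidef)
    (hU : Uᴴ * U = 1) (hV : Vᴴ * V = 1) (hD : D.IsHermitian) :
    2 * D.trace ≤ W₁.trace + W₂.trace := by
  have hW₁ : W₁.PosSemidef := hM.submatrix Sum.inl
  have hW₂ : W₂.PosSemidef := hM.submatrix Sum.inr
  rw [← sub_nonneg, trace_add_trace_sub_two_mul_trace hU hV hD]
  exact add_nonneg (add_nonneg (hW₁.conjTranspose_mul_mul_same _).trace_nonneg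
    (hW₂.conjTranspose_mul_mul_same _).trace_nonneg) (hM.conjTranspose_mul_mul_same _).trace_nonneg

theorem PosSemidef.fromBlocks_eq_of_trace_add_trace_eq
    (hM : (fromBlocks W₁ (U * D * Vᴴ) (U * D * Vᴴ)ᴴ W₂).PosSemidef)
    (hU : Uᴴ * U = 1) (hV : Vᴴ * V = 1) (hD : D.IsHermitian)
    (h : W₁.trace + W₂.trace = 2 * D.trace) :
    W₁ = U * D * Uᴴ ∧ W₂ = V * D * Vᴴ := by
  have hW₁ : W₁.PosSemidef := hM.submatrix Sum.inl
  have hW₂ : W₂.PosSemidef := hM.submatrix Sum.inr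
  have h₁ := (hW₁.conjTranspose_mul_mul_same (1 - U * Uᴴ)).trace_nonneg
  have h₂ := (hW₂.conjTranspose_mul_mul_same (1 - V * Vᴴ)).trace_nonneg
  have h₃ := (hM.conjTranspose_mul_mul_same (fromRows U (-V))).trace_nonneg
  have hgap := trace_add_trace_sub_two_mul_trace hU hV hD W₁ W₂
  rw [h, sub_self, eq_comm, add_eq_zero_iff_of_nonneg (add_nonneg h₁ h₂) h₃,
    add_eq_zero_iff_of_nonneg h₁ h₂] at hgap
  obtain ⟨⟨hK, hL⟩, hZ⟩ := hgap
  have hW₁K := hW₁.mul_eq_zero_of_trace_conjTranspose_mul_mul_eq_zero hK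
  have hW₂L := hW₂.mul_eq_zero_of_trace_conjTranspose_mul_mul_eq_zero hL
  have hMZ := hM.mul_eq_zero_of_trace_conjTranspose_mul_mul_eq_zero hZ
  rw [fromBlocks_mul_fromRows_neg hU hV hD, ← fromRows_zero, fromRows_inj.eq_iff, sub_eq_zero,
    sub_eq_zero] at hMZ
  rw [Matrix.mul_sub, Matrix.mul_one, sub_eq_zero, ← Matrix.mul_assoc, hMZ.1] at hW₁K
  rw [Matrix.mul_sub, Matrix.mul_one, sub_eq_zero, ← Matrix.mul_assoc, ← hMZ.2] at hW₂L
  exact ⟨hW₁K, hW₂L⟩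

end Matrix

/-- For `X♮ = U Σ Vᵀ` with `U, V` having orthonormal columns and `Σ = diag σ` positive, the
problem `min tr W₁ + tr W₂ s.t. [[W₁, X♮],[X♮ᵀ, W₂]] ⪰ 0` has the unique solution
`W₁ = UΣUᵀ`, `W₂ = VΣVᵀ`, with optimal value `2 tr Σ = 2‖X♮‖_*`. -/
theorem stmt7 (n₁ n₂ r : ℕ)
    (U : Matrix (Fin n₁) (Fin r) ℝ) (V : Matrix (Fin n₂) (Fin r) ℝ)
    (hU : Uᵀ * U = 1) (hV : Vᵀ * V = 1)
    (σ : Fin r → ℝ) (hσ : ∀ i, 0 < σ i)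
    (Xnat : Matrix (Fin n₁) (Fin n₂) ℝ) (hXnat : Xnat = U * Matrix.diagonal σ * Vᵀ) :
    ((Matrix.fromBlocks (U * Matrix.diagonal σ * Uᵀ) Xnat Xnatᵀ
        (V * Matrix.diagonal σ * Vᵀ)).PosSemidef ∧
      (U * Matrix.diagonal σ * Uᵀ).trace + (V * Matrix.diagonal σ * Vᵀ).trace
        = 2 * ∑ i, σ i) ∧
    ∀ (W₁ : Matrix (Fin n₁) (Fin n₁) ℝ) (W₂ : Matrix (Fin n₂) (Fin n₂) ℝ),
      (Matrix.fromBlocks W₁ Xnat Xnatᵀ W₂).PosSemidef →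
      2 * ∑ i, σ i ≤ W₁.trace + W₂.trace ∧
        (W₁.trace + W₂.trace = 2 * ∑ i, σ i →
          W₁ = U * Matrix.diagonal σ * Uᵀ ∧ W₂ = V * Matrix.diagonal σ * Vᵀ) := by
  subst hXnat
  simp only [← conjTranspose_eq_transpose_of_trivial] at hU hV ⊢
  have hD : (diagonal σ).PosSemidef := PosSemidef.diagonal fun i => (hσ i).le
  refine ⟨⟨posSemidef_fromBlocks_mul_mul_conjTranspose hD U V, ?_⟩, fun W₁ W₂ hM => ⟨?_, ?_⟩⟩
  · rw [trace_mul_mul_conjTranspose hU, trace_mul_mul_conjTranspose hV, trace_diagonal]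
    ring
  · simpa only [trace_diagonal] using hM.fromBlocks_two_mul_trace_le hU hV hD.isHermitian
  · intro h
    exact hM.fromBlocks_eq_of_trace_add_trace_eq hU hV hD.isHermitian (by rwa [trace_diagonal])
end

section
/- Let U, V ∈ ℝ^{n×r} have orthonormal columns and let E ∈ ℝ^{n×n} satisfy UᵀE = 0 and EV = 0 (i.e., E lies in T⊥) with operator norm ‖E‖_op ≤ 5/8. Let Ỹ = [[0, UVᵀ + E],[(UVᵀ + E)ᵀ, 0]]. Then for every z = [z₁; z₂] ∈ ℝ^{2n} orthogonal to the range of [U; V], one has zᵀ(I − Ỹ)z ≥ (3/8)(‖z₁‖² + ‖z₂‖²). -/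
open Matrix

/-!
Writing `Ỹ = [[0, Y₀], [Y₀ᵀ, 0]]` with `Y₀ = UVᵀ + E`, the quadratic form is
`‖z₁‖² + ‖z₂‖² - 2 z₁ᵀUVᵀz₂ - 2 z₁ᵀEz₂`. Orthogonality `Uᵀz₁ = -Vᵀz₂` makes
`z₁ᵀUVᵀz₂ = -‖Vᵀz₂‖² ≤ 0`, and `2|z₁ᵀEz₂| ≤ 2‖E‖ ‖z₁‖ ‖z₂‖ ≤ (5/8)(‖z₁‖² + ‖z₂‖²)`.
-/

section QuadraticForm

variable {R m n k : Type*} [Fintype m] [Fintype n] [Fintype k]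

theorem sumElim_dotProduct_one_sub_fromBlocks_mulVec [CommRing R] [DecidableEq m]
    [DecidableEq n] (Y : Matrix m n R) (x : m → R) (y : n → R) :
    Sum.elim x y ⬝ᵥ (1 - fromBlocks 0 Y Yᵀ 0) *ᵥ Sum.elim x y
      = x ⬝ᵥ x + y ⬝ᵥ y - 2 * (x ⬝ᵥ Y *ᵥ y) := by
  have hsym : y ⬝ᵥ Yᵀ *ᵥ x = x ⬝ᵥ Y *ᵥ y := by
    rw [dotProduct_mulVec, vecMul_transpose, dotProduct_comm]
  have hsub : Sum.elim x y - Sum.elim (Y *ᵥ y) (Yᵀ *ᵥ x)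
      = Sum.elim (x - Y *ᵥ y) (y - Yᵀ *ᵥ x) := by
    funext i; cases i <;> rfl
  rw [sub_mulVec, one_mulVec, fromBlocks_mulVec]
  simp only [Sum.elim_comp_inl, Sum.elim_comp_inr, zero_mulVec, zero_add, add_zero]
  rw [hsub, sumElim_dotProduct_sumElim, dotProduct_sub, dotProduct_sub, hsym]
  ring

theorem dotProduct_mul_transpose_mulVec [CommSemiring R] (U : Matrix m k R)
    (V : Matrix n k R) (x : m → R) (y : n → R) :
    x ⬝ᵥ (U * Vᵀ) *ᵥ y = (Uᵀ *ᵥ x) ⬝ᵥ (Vᵀ *ᵥ y) := by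
  rw [← mulVec_mulVec, dotProduct_mulVec, ← mulVec_transpose]

theorem dotProduct_mul_transpose_mulVec_nonpos [CommRing R] [LinearOrder R] [IsStrictOrderedRing R]
    (U : Matrix m k R) (V : Matrix n k R) {x : m → R} {y : n → R}
    (horth : Uᵀ *ᵥ x + Vᵀ *ᵥ y = 0) :
    x ⬝ᵥ (U * Vᵀ) *ᵥ y ≤ 0 := by
  rw [dotProduct_mul_transpose_mulVec, eq_neg_of_add_eq_zero_left horth, neg_dotProduct,
    neg_nonpos]
  exact Finset.sum_nonneg fun i _ => mul_self_nonneg _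

end QuadraticForm

section OperatorNorm

variable {n : Type*} [Fintype n]

theorem norm_toLp_sq (x : n → ℝ) : ‖WithLp.toLp 2 x‖ ^ 2 = x ⬝ᵥ x := by
  rw [← real_inner_self_eq_norm_sq, EuclideanSpace.inner_toLp_toLp, star_trivial]

theorem abs_dotProduct_mulVec_le_opNorm [DecidableEq n] (A : Matrix n n ℝ) (x y : n → ℝ) :
    |x ⬝ᵥ A *ᵥ y| ≤ ‖toEuclideanCLM (𝕜 := ℝ) A‖ * (‖WithLp.toLp 2 x‖ * ‖WithLp.toLp 2 y‖) := by
  calc |x ⬝ᵥ A *ᵥ y| = |inner ℝ (WithLp.toLp 2 (A *ᵥ y)) (WithLp.toLp 2 x)| := by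
        rw [EuclideanSpace.inner_toLp_toLp, star_trivial]
    _ ≤ ‖WithLp.toLp 2 (A *ᵥ y)‖ * ‖WithLp.toLp 2 x‖ := abs_real_inner_le_norm _ _
    _ ≤ ‖toEuclideanCLM (𝕜 := ℝ) A‖ * ‖WithLp.toLp 2 y‖ * ‖WithLp.toLp 2 x‖ := by
        rw [← toEuclideanCLM_toLp]
        gcongr
        exact ContinuousLinearMap.le_opNorm _ _
    _ = _ := by ring

theorem two_mul_abs_dotProduct_mulVec_le [DecidableEq n] (A : Matrix n n ℝ) (x y : n → ℝ) :
    2 * |x ⬝ᵥ A *ᵥ y| ≤ ‖toEuclideanCLM (𝕜 := ℝ) A‖ * (x ⬝ᵥ x + y ⬝ᵥ y) := by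
  rw [← norm_toLp_sq x, ← norm_toLp_sq y]
  calc 2 * |x ⬝ᵥ A *ᵥ y|
      ≤ ‖toEuclideanCLM (𝕜 := ℝ) A‖ * (2 * ‖WithLp.toLp 2 x‖ * ‖WithLp.toLp 2 y‖) := by
        have := abs_dotProduct_mulVec_le_opNorm A x y
        linarith
    _ ≤ _ := by gcongr; exact two_mul_le_add_sq _ _

end OperatorNorm

theorem stmt11_general (n r : ℕ)
    (U V : Matrix (Fin n) (Fin r) ℝ)
    (E : Matrix (Fin n) (Fin n) ℝ)
    (hEnorm : ‖Matrix.toEuclideanCLM (𝕜 := ℝ) E‖ ≤ 5 / 8)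
    (Ytilde : Matrix (Fin n ⊕ Fin n) (Fin n ⊕ Fin n) ℝ)
    (hYtilde : Ytilde = Matrix.fromBlocks 0 (U * Vᵀ + E) (U * Vᵀ + E)ᵀ 0)
    (z₁ z₂ : Fin n → ℝ)
    (horth : Uᵀ.mulVec z₁ + Vᵀ.mulVec z₂ = 0) :
    (3 / 8 : ℝ) * (z₁ ⬝ᵥ z₁ + z₂ ⬝ᵥ z₂) ≤
      Sum.elim z₁ z₂ ⬝ᵥ (1 - Ytilde).mulVec (Sum.elim z₁ z₂) := by
  rw [hYtilde, sumElim_dotProduct_one_sub_fromBlocks_mulVec, add_mulVec, dotProduct_add]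
  have hUV := dotProduct_mul_transpose_mulVec_nonpos U V horth
  have hE := two_mul_abs_dotProduct_mulVec_le E z₁ z₂
  have hnorm : ‖toEuclideanCLM (𝕜 := ℝ) E‖ * (z₁ ⬝ᵥ z₁ + z₂ ⬝ᵥ z₂)
      ≤ 5 / 8 * (z₁ ⬝ᵥ z₁ + z₂ ⬝ᵥ z₂) :=
    mul_le_mul_of_nonneg_right hEnorm
      (add_nonneg (dotProduct_self_star_nonneg z₁) (dotProduct_self_star_nonneg z₂))
  linarith [le_abs_self (z₁ ⬝ᵥ E *ᵥ z₂)]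

/-- Quadratic-form lower bound: with `Y₀ = UVᵀ + E`, `E ∈ T⊥`, `‖E‖_op ≤ 5/8`, and
`Ỹ = [[0, Y₀],[Y₀ᵀ, 0]]`, every `z = [z₁; z₂]` orthogonal to the range of `[U; V]` satisfies
`zᵀ(I − Ỹ)z ≥ (3/8)(‖z₁‖² + ‖z₂‖²)`. -/
theorem stmt11 (n r : ℕ)
    (U V : Matrix (Fin n) (Fin r) ℝ) (hU : Uᵀ * U = 1) (hV : Vᵀ * V = 1)
    (E : Matrix (Fin n) (Fin n) ℝ) (hUE : Uᵀ * E = 0) (hEV : E * V = 0)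
    (hEnorm : ‖Matrix.toEuclideanCLM (𝕜 := ℝ) E‖ ≤ 5 / 8)
    (Ytilde : Matrix (Fin n ⊕ Fin n) (Fin n ⊕ Fin n) ℝ)
    (hYtilde : Ytilde = Matrix.fromBlocks 0 (U * Vᵀ + E) (U * Vᵀ + E)ᵀ 0)
    (z₁ z₂ : Fin n → ℝ)
    (horth : Uᵀ.mulVec z₁ + Vᵀ.mulVec z₂ = 0) :
    (3 / 8 : ℝ) * (z₁ ⬝ᵥ z₁ + z₂ ⬝ᵥ z₂) ≤
      Sum.elim z₁ z₂ ⬝ᵥ (1 - Ytilde).mulVec (Sum.elim z₁ z₂) :=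
  stmt11_general n r U V E hEnorm Ytilde hYtilde z₁ z₂ horth
end
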